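/- Let φ : ℝ × (0, ∞) → ℝ be an arbitrary real-valued function. Then for all r > 0 and all (s,r) with φ(s,r) > 0, 1/( 2φ(s,r) + 2·K_{n=1}^∞ (n²r²/φ(s,r)) ) = (1/r)·∫_0^1 x^{φ(s,r)/r}/(1+x²) dx, where φ(s,r) + K_{n=1}^∞ (n²r²/φ(s,r)) denotes the limit of the convergents of the generalized continued fraction with integer part φ(s,r), partial numerators a_n = n²r² and partial denominators b_n = φ(s,r). -/

import Mathlib

/-!
Put `H m = ∫₀¹ x ^ u (1 - x²) ^ m / (1 + x²) ^ (m + 1) dx`. Differentiating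
`x ↦ x (integrand)` gives `u H m + (m + 1) H (m + 1) - m H (m - 1) = [m = 0] / 2`, so
`w n = r (n + 1) H (n + 1) / H n` satisfies `w n (u r + w (n + 1)) = (n + 1)² r²`: `w` is a
positive tail sequence of the continued fraction with `t = u r`, whose value is therefore `w 0`.
The case `m = 0` of the recurrence then gives `2 t + 2 w 0 = r / H 0`.
-/

open Filter Real

/-- Numerators of the convergents of a generalized continued fraction with
integer part `b₀`, partial numerators `a n` and partial denominators `b n` (for `n ≥ 1`). -/
noncomputable def cfNum (b₀ : ℝ) (a b : ℕ → ℝ) : ℕ → ℝ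
  | 0 => b₀
  | 1 => b 1 * b₀ + a 1
  | n + 2 => b (n + 2) * cfNum b₀ a b (n + 1) + a (n + 2) * cfNum b₀ a b n

/-- Denominators of the convergents of a generalized continued fraction. -/
noncomputable def cfDen (a b : ℕ → ℝ) : ℕ → ℝ
  | 0 => 1
  | 1 => b 1
  | n + 2 => b (n + 2) * cfDen a b (n + 1) + a (n + 2) * cfDen a b n

/-- `IsCFLimit b₀ a b L` means: the convergents of the generalized continued fraction
`b₀ + a 1 / (b 1 + a 2 / (b 2 + ⋯))` tend to `L`. -/
def IsCFLimit (b₀ : ℝ) (a b : ℕ → ℝ) (L : ℝ) : Prop :=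
  Filter.Tendsto (fun n => cfNum b₀ a b n / cfDen a b n) Filter.atTop (nhds L)

section ContinuedFraction

variable {b₀ : ℝ} {a b w : ℕ → ℝ}

theorem cfDen_pos (ha : ∀ n, 0 ≤ a (n + 1)) (hb : ∀ n, 0 < b (n + 1)) (n : ℕ) :
    0 < cfDen a b n := by
  suffices ∀ n, 0 < cfDen a b n ∧ 0 < cfDen a b (n + 1) from (this n).1
  intro n
  induction n with
  | zero => exact ⟨one_pos, hb 0⟩
  | succ k ih =>
    refine ⟨ih.2, ?_⟩
    rw [cfDen]
    exact add_pos_of_pos_of_nonneg (mul_pos (hb (k + 1)) ih.2) (mul_nonneg (ha (k + 1)) ih.1.le)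

theorem cfNum_add_mul_cfNum (htail : ∀ n, w n * (b (n + 1) + w (n + 1)) = a (n + 1)) (n : ℕ) :
    cfNum b₀ a b (n + 1) + w (n + 1) * cfNum b₀ a b n =
      (b₀ + w 0) * (cfDen a b (n + 1) + w (n + 1) * cfDen a b n) := by
  induction n with
  | zero =>
    simp only [cfNum, cfDen]
    linear_combination -htail 0
  | succ k ih =>
    rw [cfNum, cfDen]
    linear_combination (b (k + 2) + w (k + 2)) * ih
      - (cfNum b₀ a b k - (b₀ + w 0) * cfDen a b k) * htail (k + 1)

theorem IsCFLimit.eq_add_of_tail {L : ℝ} (hL : IsCFLimit b₀ a b L) (hb : ∀ n, 0 < b (n + 1))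
    (hw : ∀ n, 0 < w n) (htail : ∀ n, w n * (b (n + 1) + w (n + 1)) = a (n + 1)) :
    L = b₀ + w 0 := by
  set V := b₀ + w 0
  -- Consecutive convergents lie on opposite sides of `V`, so in the limit `(V - L) ^ 2 ≤ 0`.
  have hQ := cfDen_pos (fun n => htail n ▸ (mul_pos (hw n) (add_pos (hb n) (hw (n + 1)))).le) hb
  have hsign : ∀ n, (V - cfNum b₀ a b (n + 1) / cfDen a b (n + 1)) *
      (V - cfNum b₀ a b n / cfDen a b n) ≤ 0 := by
    intro n
    have h₀ := (hQ n).ne'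
    have h₁ := (hQ (n + 1)).ne'
    have key : V * cfDen a b (n + 1) - cfNum b₀ a b (n + 1) =
        -(w (n + 1) * (V * cfDen a b n - cfNum b₀ a b n)) := by
      linear_combination -cfNum_add_mul_cfNum htail n
    have : (V - cfNum b₀ a b (n + 1) / cfDen a b (n + 1)) * (V - cfNum b₀ a b n / cfDen a b n) =
        -(w (n + 1) * (V * cfDen a b n - cfNum b₀ a b n) ^ 2) / (cfDen a b (n + 1) * cfDen a b n) := by
      rw [sub_div' h₁, sub_div' h₀, key]
      ring
    rw [this]
    exact div_nonpos_of_nonpos_of_nonneg (neg_nonpos.2 (mul_nonneg (hw _).le (sq_nonneg _)))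
      (mul_pos (hQ _) (hQ n)).le
  have hlim : Tendsto (fun n => (V - cfNum b₀ a b (n + 1) / cfDen a b (n + 1)) *
      (V - cfNum b₀ a b n / cfDen a b n)) atTop (nhds ((V - L) * (V - L))) :=
    (tendsto_const_nhds.sub (hL.comp (tendsto_add_atTop_nat 1))).mul (tendsto_const_nhds.sub hL)
  nlinarith [le_of_tendsto hlim (Eventually.of_forall hsign), sq_nonneg (V - L)]

end ContinuedFraction

open Set

noncomputable def momentIntegrand (u : ℝ) (m : ℕ) (x : ℝ) : ℝ :=
  x ^ u * (1 - x ^ 2) ^ m / (1 + x ^ 2) ^ (m + 1)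

noncomputable def momentIntegral (u : ℝ) (m : ℕ) : ℝ :=
  ∫ x in (0 : ℝ)..1, momentIntegrand u m x

section Moments

variable {u : ℝ}

theorem continuousOn_momentIntegrand (hu : 0 ≤ u) (m : ℕ) :
    ContinuousOn (momentIntegrand u m) (Icc 0 1) := by
  refine ContinuousOn.div ?_ (by fun_prop) fun x _ => by positivity
  exact (continuous_id.rpow_const fun _ => Or.inr hu).continuousOn.mul (by fun_prop)

theorem intervalIntegrable_momentIntegrand (hu : 0 ≤ u) (m : ℕ) :
    IntervalIntegrable (momentIntegrand u m) MeasureTheory.volume 0 1 :=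
  (continuousOn_momentIntegrand hu m).intervalIntegrable_of_Icc zero_le_one

theorem momentIntegral_pos (hu : 0 ≤ u) (m : ℕ) : 0 < momentIntegral u m := by
  refine intervalIntegral.intervalIntegral_pos_of_pos_on
    (intervalIntegrable_momentIntegrand hu m) (fun x hx => ?_) one_pos
  have : 0 < x ^ u := rpow_pos_of_pos hx.1 u
  have : 0 < 1 - x ^ 2 := by nlinarith [hx.1, hx.2]
  unfold momentIntegrand
  positivity

theorem hasDerivAt_mul_momentIntegrand (m : ℕ) {x : ℝ} (hx : 0 < x) :
    HasDerivAt (fun y => y * momentIntegrand u m y)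
      (u * momentIntegrand u m x + (m + 1) * momentIntegrand u (m + 1) x
        - m * momentIntegrand u (m - 1) x) x := by
  have hq : (1 + x ^ 2) ≠ 0 := by positivity
  have hd := (hasDerivAt_id x).fun_mul (((hasDerivAt_rpow_const (p := u) (Or.inl hx.ne')).fun_mul
    (((hasDerivAt_pow 2 x).const_sub 1).fun_pow m)).fun_div
    (((hasDerivAt_pow 2 x).const_add 1).fun_pow (m + 1)) (pow_ne_zero _ hq))
  refine hd.congr_deriv ?_
  rw [rpow_sub_one hx.ne']
  unfold momentIntegrand
  -- At `m = 0` the term with the truncated index `m - 1` has coefficient `0`.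
  rcases m with _ | m <;>
    simp only [id, Nat.cast_zero, zero_mul, Nat.add_sub_cancel, Nat.cast_add, Nat.cast_one] <;>
    field_simp <;> ring

theorem momentIntegral_recurrence (hu : 0 ≤ u) (m : ℕ) :
    u * momentIntegral u m + (m + 1) * momentIntegral u (m + 1) - m * momentIntegral u (m - 1) =
      0 ^ m / 2 ^ (m + 1) := by
  have hi := intervalIntegrable_momentIntegrand hu
  have hcont : ContinuousOn (fun y => y * momentIntegrand u m y) (Icc 0 1) :=
    continuousOn_id.mul (continuousOn_momentIntegrand hu m)
  have hftc := intervalIntegral.integral_eq_sub_of_hasDeriv_right_of_le zero_le_one hcont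
    (fun x hx => (hasDerivAt_mul_momentIntegrand m hx.1).hasDerivWithinAt)
    ((((hi m).const_mul u).add ((hi (m + 1)).const_mul _)).sub ((hi (m - 1)).const_mul _))
  rw [intervalIntegral.integral_sub (((hi m).const_mul u).add ((hi (m + 1)).const_mul _))
    ((hi (m - 1)).const_mul _), intervalIntegral.integral_add ((hi m).const_mul u)
    ((hi (m + 1)).const_mul _), intervalIntegral.integral_const_mul,
    intervalIntegral.integral_const_mul, intervalIntegral.integral_const_mul] at hftc
  simpa [momentIntegral, momentIntegrand, one_add_one_eq_two] using hftc

noncomputable def momentTail (u r : ℝ) (n : ℕ) : ℝ :=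
  r * (n + 1) * momentIntegral u (n + 1) / momentIntegral u n

theorem momentTail_pos (hu : 0 ≤ u) {r : ℝ} (hr : 0 < r) (n : ℕ) : 0 < momentTail u r n := by
  have := momentIntegral_pos hu n
  have := momentIntegral_pos hu (n + 1)
  unfold momentTail
  positivity

theorem momentTail_mul_add (hu : 0 ≤ u) (r : ℝ) (n : ℕ) :
    momentTail u r n * (u * r + momentTail u r (n + 1)) = ((n + 1 : ℕ) : ℝ) ^ 2 * r ^ 2 := by
  have hrec := momentIntegral_recurrence hu (n + 1)
  have h₀ := (momentIntegral_pos hu n).ne'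
  have h₁ := (momentIntegral_pos hu (n + 1)).ne'
  simp only [Nat.add_sub_cancel, Nat.cast_add, Nat.cast_one, zero_pow n.succ_ne_zero, zero_div]
    at hrec
  unfold momentTail
  field_simp
  push_cast
  linear_combination r ^ 2 * (n + 1) * hrec

end Moments

theorem isCFLimit_eq_momentTail {u r K : ℝ} (hu : 0 < u) (hr : 0 < r)
    (hK : IsCFLimit 0 (fun n => (n : ℝ) ^ 2 * r ^ 2) (fun _ => u * r) K) :
    K = momentTail u r 0 := by
  simpa using hK.eq_add_of_tail (fun _ => mul_pos hu hr) (momentTail_pos hu.le hr)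
    (momentTail_mul_add hu.le r)

theorem cf_integral_representation (φ : ℝ → ℝ → ℝ) (s r : ℝ) (hr : 0 < r)
    (hφ : 0 < φ s r) (K : ℝ)
    (hK : IsCFLimit 0 (fun n => (n : ℝ) ^ 2 * r ^ 2) (fun _ => φ s r) K) :
    1 / (2 * φ s r + 2 * K) =
      (1 / r) * ∫ x in (0 : ℝ)..1, x ^ (φ s r / r) / (1 + x ^ 2) := by
  obtain ⟨u, hu⟩ : ∃ u, φ s r / r = u := ⟨_, rfl⟩
  have ht : φ s r = u * r := by rw [← hu, div_mul_cancel₀ _ hr.ne']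
  have hu₀ : 0 < u := hu ▸ div_pos hφ hr
  rw [hu]
  rw [ht] at hK ⊢
  have hH := (momentIntegral_pos hu₀.le 0).ne'
  have hrec := momentIntegral_recurrence hu₀.le 0
  have hint : ∫ x in (0 : ℝ)..1, x ^ u / (1 + x ^ 2) = momentIntegral u 0 := by
    simp [momentIntegral, momentIntegrand]
  rw [hint, isCFLimit_eq_momentTail hu₀ hr hK, momentTail]
  norm_num at hrec ⊢
  field_simp
  linear_combination -2 * hrec
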